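/- Let 𝔥 be the Lie algebra on ℝ⁷ with structure equations de¹ = 0, de² = 0, de³ = −e³⁷, de⁴ = e⁴⁷, de⁵ = 2 e¹⁴ + e⁵⁷, de⁶ = −2 e²⁴ + e⁶⁷, de⁷ = 0, let φ = e¹²⁷ + e³⁴⁷ + e⁵⁶⁷ + e¹³⁵ − e¹⁴⁶ − e²³⁶ − e²⁴⁵ with induced metric g_φ = Σ_{i=1}^{7} (e^i)² and volume form dV_φ = e¹²³⁴⁵⁶⁷, and let τ = 2 e¹² + 2 e³⁴ − 4 e⁵⁶. Then |τ|²_{g_φ} = 24; the unique 3-form σ satisfying α ∧ (τ ∧ τ) = ⟨α, σ⟩_{g_φ} dV_φ for every 3-form α (i.e., σ = *_φ(τ ∧ τ)) equals −16(e¹²⁷ + e³⁴⁷) + 8 e⁵⁶⁷; and dτ ≠ (1/6)|τ|² φ + (1/6)σ. Hence the closed G₂-structure φ is not extremally Ricci pinched. -/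

import Mathlib

/-!
Common framework: unbundled exterior forms on ℝ⁷, wedge product, interior product,
Chevalley–Eilenberg differential of a Lie bracket, induced inner products on forms,
derived series, and the Lie algebras / G₂-structures from the paper
"Laplacian flow solitons on non-solvable Lie groups" (Fino–Raffero).
-/

open scoped BigOperators

namespace G2Solitons

/-- The underlying vector space ℝ⁷. -/
abbrev V7 : Type := Fin 7 → ℝ

/-- Unbundled `k`-forms: real-valued functions of `k` vectors of ℝ⁷. -/
abbrev Form (k : ℕ) : Type := (Fin k → V7) → ℝ

/-- Standard basis of ℝ⁷. -/
def stdB (i : Fin 7) : V7 := fun j => if j = i then 1 else 0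

/-- The basic `k`-form `e^{i₁} ∧ ⋯ ∧ e^{i_k}` (determinant convention, 0-indexed). -/
def eB {k : ℕ} (idx : Fin k → Fin 7) : Form k :=
  fun v => Matrix.det (Matrix.of fun a b : Fin k => v a (idx b))

/-- Wedge product of a `p`-form and a `q`-form (convention
`(α∧β)(v) = (p!q!)⁻¹ ∑_σ sgn σ · α(v∘σ|_{first p}) β(v∘σ|_{last q})`). -/
noncomputable def wedge {p q : ℕ} (α : Form p) (β : Form q) : Form (p + q) := fun v =>
  ((p.factorial * q.factorial : ℕ) : ℝ)⁻¹ *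
    ∑ σ : Equiv.Perm (Fin (p + q)),
      ((Equiv.Perm.sign σ : ℤ) : ℝ) *
        (α (fun i => v (σ (Fin.castAdd q i))) * β (fun j => v (σ (Fin.natAdd p j))))

/-- Interior product of a vector with a `(k+1)`-form. -/
def iprod {k : ℕ} (u : V7) (α : Form (k + 1)) : Form k := fun v => α (Fin.cons u v)

/-- Chevalley–Eilenberg differential of a `(k+1)`-form with respect to a bracket:
`(dα)(x₀,…,x_{k+1}) = ∑_{i<j} (-1)^{i+j} α([xᵢ,xⱼ], x₀,…,x̂ᵢ,…,x̂ⱼ,…,x_{k+1})`. -/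
def dCE {k : ℕ} (br : V7 → V7 → V7) (α : Form (k + 1)) : Form (k + 2) := fun v =>
  ∑ i : Fin (k + 2), ∑ j : Fin (k + 2),
    if (i : ℕ) < (j : ℕ) then
      (-1 : ℝ) ^ ((i : ℕ) + (j : ℕ)) *
        α (Fin.cons (br (v i) (v j)) fun l : Fin k =>
            if (l : ℕ) < (i : ℕ) then v ⟨(l : ℕ), by omega⟩
            else if (l : ℕ) + 1 < (j : ℕ) then v ⟨(l : ℕ) + 1, by omega⟩
            else v ⟨(l : ℕ) + 2, by omega⟩)
    else 0

/-- Inner product on `k`-forms induced by the diagonal metric `g = ∑ᵢ c i (e^i)²`,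
determined by declaring `{(c i₁ ⋯ c i_k)^{-1/2} e^{i₁⋯i_k} : i₁ < ⋯ < i_k}` orthonormal. -/
noncomputable def formInner (c : Fin 7 → ℝ) {k : ℕ} (α β : Form k) : ℝ :=
  ((k.factorial : ℕ) : ℝ)⁻¹ *
    ∑ f : Fin k → Fin 7,
      (∏ i, c (f i))⁻¹ * (α (fun i => stdB (f i)) * β (fun i => stdB (f i)))

/-- Natural action of an endomorphism `D` on a `k`-form:
`(D.α)(v₁,…,v_k) = ∑ᵢ α(v₁,…,D vᵢ,…,v_k)`. -/
def actD {k : ℕ} (D : V7 → V7) (α : Form k) : Form k := fun v =>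
  ∑ i : Fin k, α (Function.update v i (D (v i)))

/-- The Jacobi identity for a bilinear bracket. -/
def Jacobi (br : V7 → V7 → V7) : Prop :=
  ∀ x y z : V7, br (br x y) z + br (br y z) x + br (br z x) y = 0

/-- Unimodularity: `tr (ad x) = 0` for all `x`. -/
def Unimodular (br : V7 → V7 → V7) : Prop :=
  ∀ x : V7, ∑ i : Fin 7, br x (stdB i) i = 0

/-- Derivation property for a map `D`. -/
def IsDeriv (br : V7 → V7 → V7) (D : V7 → V7) : Prop :=
  ∀ x y : V7, D (br x y) = br (D x) y + br x (D y)

/-- Derived series of a bracket. -/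
def derSeries (br : V7 → V7 → V7) : ℕ → Submodule ℝ V7
  | 0 => ⊤
  | n + 1 => Submodule.span ℝ
      {z | ∃ x ∈ derSeries br n, ∃ y ∈ derSeries br n, z = br x y}

/-- Solvability: the derived series terminates at zero. -/
def Solvable (br : V7 → V7 → V7) : Prop := ∃ n, derSeries br n = ⊥

/-- Real cube root (the real root, also for negative arguments). -/
noncomputable def cbrt (x : ℝ) : ℝ :=
  if x < 0 then -((-x) ^ ((1 : ℝ) / 3)) else x ^ ((1 : ℝ) / 3)

/-- The standard volume form `e^{1234567}`. -/
def vol7 : Form 7 := eB ![0, 1, 2, 3, 4, 5, 6]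

end G2Solitons

namespace G2Solitons

noncomputable section

/-- The bracket of the Lie algebra `𝔥` with structure equations
`(0, 0, -e³⁷, e⁴⁷, 2 e¹⁴ + e⁵⁷, -2 e²⁴ + e⁶⁷, 0)`,
via the convention `dα(x,y) = -α([x,y])`. -/
def brH : V7 → V7 → V7 := fun x y =>
  ![0,
    0,
    x 2 * y 6 - x 6 * y 2,
    -(x 3 * y 6 - x 6 * y 3),
    -2 * (x 0 * y 3 - x 3 * y 0) - (x 4 * y 6 - x 6 * y 4),
    2 * (x 1 * y 3 - x 3 * y 1) - (x 5 * y 6 - x 6 * y 5),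
    0]

/-- `φ = e¹²⁷ + e³⁴⁷ + e⁵⁶⁷ + e¹³⁵ - e¹⁴⁶ - e²³⁶ - e²⁴⁵`. -/
def phiH : Form 3 := fun v =>
  eB ![0, 1, 6] v + eB ![2, 3, 6] v + eB ![4, 5, 6] v
    + eB ![0, 2, 4] v - eB ![0, 3, 5] v - eB ![1, 2, 5] v - eB ![1, 3, 4] v

/-- The standard Euclidean metric `g_φ = ∑_{i=1}^{7} (e^i)²`. -/
def gH (u v : V7) : ℝ := ∑ i : Fin 7, u i * v i

/-- `τ = 2 e¹² + 2 e³⁴ - 4 e⁵⁶`. -/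
def tauH : Form 2 := fun v =>
  2 * eB ![0, 1] v + 2 * eB ![2, 3] v - 4 * eB ![4, 5] v

/-- `D = diag(0, 0, -4, 4, 4, 4, 0)`. -/
def DH : V7 → V7 := fun x i => (![0, 0, -4, 4, 4, 4, 0] : Fin 7 → ℝ) i * x i

end

end G2Solitons

/-!
The indices of `eB` are shifted down by one: `eB ![4, 5, 6]` is `e⁵⁶⁷`.

Testing the defining identity of `σ` against `α = e^{ijk}` gives
`σ(e_i, e_j, e_k) = (e^{ijk} ∧ τ ∧ τ)(e_1, …, e_7)`. Since
`τ ∧ τ = 8 e¹²³⁴ - 16 e¹²⁵⁶ - 16 e³⁴⁵⁶`, the only increasing triples that survive are the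
complements `567`, `347`, `127`, and an alternating map is determined by its values on increasing
triples of basis vectors. Finally, at `(e₁, e₃, e₅)` both `dτ` and `σ` vanish while `φ = 1`, so the
ERP identity would read `0 = |τ|²/6 = 4`.
-/

theorem StrictMono.eq_of_range_subset {α β : Type*} [LinearOrder α] [Finite α] [Preorder β]
    {f g : α → β} (hf : StrictMono f) (hg : StrictMono g) (h : Set.range f ⊆ Set.range g) :
    f = g := by
  choose e he using fun a => h (Set.mem_range_self a)
  have he_mono : StrictMono e := fun a b hab => hg.lt_iff_lt.mp (by simpa only [he] using hf hab)
  funext a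
  rw [← he a, he_mono.eq_id, id]

theorem Module.Basis.ext_alternating_of_strictMono {R M N ι : Type*} [CommSemiring R]
    [AddCommMonoid M] [Module R M] [AddCommGroup N] [Module R N] [LinearOrder ι] {k : ℕ}
    {f g : M [⋀^Fin k]→ₗ[R] N} (b : Module.Basis ι R M)
    (h : ∀ v : Fin k → ι, StrictMono v → (f fun i => b (v i)) = g fun i => b (v i)) :
    f = g := by
  refine b.ext_alternating fun v hv => ?_
  set π := Tuple.sort v
  have hsorted : StrictMono (v ∘ π) :=
    (Tuple.monotone_sort v).strictMono_of_injective (hv.comp π.injective)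
  rw [f.map_congr_perm _ π, g.map_congr_perm _ π]
  exact congrArg _ (h _ hsorted)

theorem StrictMono.eq_of_injective_append {k l n : ℕ} {v K : Fin k → Fin n} {J : Fin l → Fin n}
    (hv : StrictMono v) (hK : StrictMono K) (hKJ : Function.Surjective (Fin.append K J))
    (hvJ : Function.Injective (Fin.append v J)) : v = K := by
  refine hv.eq_of_range_subset hK ?_
  rintro _ ⟨i, rfl⟩
  obtain ⟨y, hy⟩ := hKJ (v i)
  induction y using Fin.addCases with
  | left j => exact ⟨j, by simpa using hy⟩
  | right j =>
    have := congrArg Fin.val (@hvJ (Fin.castAdd l i) (Fin.natAdd k j) (by simpa using hy.symm))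
    simp only [Fin.val_castAdd, Fin.val_natAdd] at this
    omega

namespace G2Solitons

theorem stdB_eq_basisFun : stdB = Pi.basisFun ℝ (Fin 7) := by
  funext i j
  simp [stdB, Pi.single_apply]

def altB {k : ℕ} (idx : Fin k → Fin 7) : V7 [⋀^Fin k]→ₗ[ℝ] ℝ :=
  Matrix.detRowAlternating.compLinearMap (LinearMap.pi fun b => LinearMap.proj (idx b))

@[simp] theorem coe_altB {k : ℕ} (idx : Fin k → Fin 7) : ⇑(altB idx) = eB idx := rfl

theorem eB_comp_perm {k : ℕ} (idx : Fin k → Fin 7) (π : Equiv.Perm (Fin k)) :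
    eB (idx ∘ π) = ((Equiv.Perm.sign π : ℤ) : ℝ) • eB idx := by
  funext v
  simpa [eB, Matrix.submatrix, Units.smul_def] using
    Matrix.det_permute' π (Matrix.of fun a b : Fin k => v a (idx b))

theorem eB_eq_zero_of_not_injective {k : ℕ} {idx : Fin k → Fin 7}
    (h : ¬ Function.Injective idx) : eB idx = 0 := by
  obtain ⟨a, b, hab, hne⟩ := Function.not_injective_iff.mp h
  funext v
  exact Matrix.det_zero_of_column_eq hne fun i => by simp [hab]

theorem eB_stdB_perm (π : Equiv.Perm (Fin 7)) :
    eB π stdB = ((Equiv.Perm.sign π : ℤ) : ℝ) := by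
  have hM : (Matrix.of fun a b : Fin 7 => stdB a (π b)) = (π.permMatrix ℝ).transpose := by
    ext a b
    simp [stdB, Equiv.Perm.permMatrix, PEquiv.toMatrix_apply]
  rw [eB, hM, Matrix.det_transpose, Matrix.det_permutation]

theorem eB_stdB_of_strictMono {k : ℕ} {v K : Fin k → Fin 7} (hv : StrictMono v)
    (hK : StrictMono K) : eB K (fun i => stdB (v i)) = if v = K then 1 else 0 := by
  split_ifs with h
  · subst h
    have h1 : (Matrix.of fun a b : Fin k => stdB (v a) (v b)) = 1 := by
      ext a b
      simp [stdB, Matrix.one_apply, hv.injective.eq_iff, eq_comm]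
    rw [eB, h1, Matrix.det_one]
  · obtain ⟨b, hb⟩ : ∃ b, ∀ a, v a ≠ K b := by
      by_contra! hcon
      exact h (hK.eq_of_range_subset hv (Set.range_subset_iff.mpr fun b => hcon b)).symm
    exact Matrix.det_eq_zero_of_column_eq_zero b fun a => by simp [stdB, (hb a).symm]

theorem eB_append_stdB {v K : Fin 3 → Fin 7} {J : Fin 4 → Fin 7} (hv : StrictMono v)
    (hK : StrictMono K) (hKJ : Function.Bijective (Fin.append K J)) :
    eB (Fin.append v J) stdB
      = if v = K then ((Equiv.Perm.sign (Equiv.ofBijective _ hKJ) : ℤ) : ℝ) else 0 := by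
  split_ifs with h
  · subst h
    exact eB_stdB_perm (Equiv.ofBijective _ hKJ)
  · rw [eB_eq_zero_of_not_injective fun hinj => h (hv.eq_of_injective_append hK hKJ.2 hinj)]
    rfl

theorem wedge_add_left {p q : ℕ} (α₁ α₂ : Form p) (β : Form q) :
    wedge (α₁ + α₂) β = wedge α₁ β + wedge α₂ β := by
  funext v
  simp only [wedge, Pi.add_apply, add_mul, mul_add, Finset.sum_add_distrib]

theorem wedge_smul_left {p q : ℕ} (c : ℝ) (α : Form p) (β : Form q) :
    wedge (c • α) β = c • wedge α β := by
  funext v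
  simp only [wedge, Pi.smul_apply, smul_eq_mul, Finset.mul_sum]
  exact Finset.sum_congr rfl fun _ _ => by ring

theorem wedge_add_right {p q : ℕ} (α : Form p) (β₁ β₂ : Form q) :
    wedge α (β₁ + β₂) = wedge α β₁ + wedge α β₂ := by
  funext v
  simp only [wedge, Pi.add_apply, mul_add, Finset.sum_add_distrib]

theorem wedge_smul_right {p q : ℕ} (c : ℝ) (α : Form p) (β : Form q) :
    wedge α (c • β) = c • wedge α β := by
  funext v
  simp only [wedge, Pi.smul_apply, smul_eq_mul, Finset.mul_sum]
  exact Finset.sum_congr rfl fun _ _ => by ring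

def permAppend {p q : ℕ} (π₁ : Equiv.Perm (Fin p)) (π₂ : Equiv.Perm (Fin q)) :
    Equiv.Perm (Fin (p + q)) :=
  Equiv.permCongr finSumFinEquiv (Equiv.sumCongr π₁ π₂)

@[simp] theorem permAppend_castAdd {p q : ℕ} (π₁ : Equiv.Perm (Fin p)) (π₂ : Equiv.Perm (Fin q))
    (i : Fin p) : permAppend π₁ π₂ (Fin.castAdd q i) = Fin.castAdd q (π₁ i) := by
  simp [permAppend, Equiv.permCongr_apply]

@[simp] theorem permAppend_natAdd {p q : ℕ} (π₁ : Equiv.Perm (Fin p)) (π₂ : Equiv.Perm (Fin q))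
    (j : Fin q) : permAppend π₁ π₂ (Fin.natAdd p j) = Fin.natAdd p (π₂ j) := by
  simp [permAppend, Equiv.permCongr_apply]

@[simp] theorem sign_permAppend {p q : ℕ} (π₁ : Equiv.Perm (Fin p)) (π₂ : Equiv.Perm (Fin q)) :
    Equiv.Perm.sign (permAppend π₁ π₂) = Equiv.Perm.sign π₁ * Equiv.Perm.sign π₂ := by
  simp [permAppend, Equiv.Perm.sign_permCongr, Equiv.Perm.sign_sumCongr]

theorem wedge_eB {p q : ℕ} (a : Fin p → Fin 7) (b : Fin q → Fin 7) :
    wedge (eB a) (eB b) = eB (Fin.append a b) := by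
  funext v
  set F : Equiv.Perm (Fin (p + q)) → ℝ := fun σ =>
    (Equiv.Perm.sign σ : ℤ) * ∏ c, v (σ c) (Fin.append a b c) with hF
  have hdet : eB (Fin.append a b) v = ∑ σ, F σ := by
    simp [eB, Matrix.det_apply, hF, Units.smul_def]
  have hsplit : ∀ σ, ((Equiv.Perm.sign σ : ℤ) : ℝ) *
      (eB a (fun i => v (σ (Fin.castAdd q i))) * eB b (fun j => v (σ (Fin.natAdd p j))))
        = ∑ π₁, ∑ π₂, F (σ * permAppend π₁ π₂) := by
    intro σ
    simp only [eB, Matrix.det_apply, Matrix.of_apply, Units.smul_def, zsmul_eq_mul]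
    rw [Finset.sum_mul_sum, Finset.mul_sum]
    simp only [Finset.mul_sum, hF, Fin.prod_univ_add,
      Fin.append_left, Fin.append_right, Equiv.Perm.mul_apply, permAppend_castAdd,
      permAppend_natAdd, map_mul, sign_permAppend]
    refine Finset.sum_congr rfl fun π₁ _ => Finset.sum_congr rfl fun π₂ _ => ?_
    push_cast
    ring
  have hshift : ∀ π₁ π₂, ∑ σ, F (σ * permAppend π₁ π₂) = ∑ σ, F σ := fun π₁ π₂ =>
    Equiv.sum_comp (Equiv.mulRight (permAppend π₁ π₂)) F
  have hreindex : ∑ σ, ∑ π₁, ∑ π₂, F (σ * permAppend π₁ π₂)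
      = ∑ _π₁ : Equiv.Perm (Fin p), ∑ _π₂ : Equiv.Perm (Fin q), ∑ σ, F σ := by
    rw [Finset.sum_comm]
    refine Finset.sum_congr rfl fun π₁ _ => ?_
    rw [Finset.sum_comm]
    exact Finset.sum_congr rfl fun π₂ _ => hshift π₁ π₂
  rw [wedge, hdet, Finset.sum_congr rfl fun σ _ => hsplit σ, hreindex]
  simp [Finset.card_univ, Fintype.card_perm]
  field_simp

theorem formInner_add_left (c : Fin 7 → ℝ) {k : ℕ} (α₁ α₂ β : Form k) :
    formInner c (α₁ + α₂) β = formInner c α₁ β + formInner c α₂ β := by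
  simp only [formInner, Pi.add_apply, add_mul, mul_add, Finset.sum_add_distrib]

theorem formInner_smul_left (c : Fin 7 → ℝ) {k : ℕ} (a : ℝ) (α β : Form k) :
    formInner c (a • α) β = a * formInner c α β := by
  simp only [formInner, Pi.smul_apply, smul_eq_mul, Finset.mul_sum]
  exact Finset.sum_congr rfl fun _ _ => by ring

theorem formInner_eB (c : Fin 7 → ℝ) {k : ℕ} (idx : Fin k → Fin 7) (σ : V7 [⋀^Fin k]→ₗ[ℝ] ℝ) :
    formInner c (eB idx) σ = (∏ i, c (idx i))⁻¹ * σ (fun i => stdB (idx i)) := by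
  have hdelta : ∀ (f : Fin k → Fin 7) (π : Equiv.Perm (Fin k)),
      ∏ i, stdB (f (π i)) (idx i) = if f = idx ∘ π.symm then 1 else 0 := by
    intro f π
    have : (∀ i, idx i = f (π i)) ↔ f = idx ∘ π.symm := by
      refine ⟨fun h => funext fun j => ?_, fun h i => by simp [h]⟩
      simpa using (h (π.symm j)).symm
    simp only [stdB, Finset.prod_boole, Finset.mem_univ, true_implies, this]
  have hperm : ∀ π : Equiv.Perm (Fin k),
      ((Equiv.Perm.sign π : ℤ) : ℝ) * ((∏ i, c ((idx ∘ π.symm) i))⁻¹ *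
        σ (fun i => stdB ((idx ∘ π.symm) i)))
        = (∏ i, c (idx i))⁻¹ * σ (fun i => stdB (idx i)) := by
    intro π
    have hsq : ((Equiv.Perm.sign π : ℤ) : ℝ) * ((Equiv.Perm.sign π : ℤ) : ℝ) = 1 := by
      rw [← Int.cast_mul, ← Units.val_mul, Int.units_mul_self, Units.val_one, Int.cast_one]
    rw [show (fun i => stdB ((idx ∘ π.symm) i)) = (fun i => stdB (idx i)) ∘ π.symm from rfl,
      σ.map_perm, Equiv.Perm.sign_symm, Units.smul_def, zsmul_eq_mul, Function.comp_def,
      Equiv.prod_comp π.symm fun i => c (idx i)]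
    linear_combination (∏ i, c (idx i))⁻¹ * σ (fun i => stdB (idx i)) * hsq
  calc formInner c (eB idx) σ
      = (k.factorial : ℝ)⁻¹ * ∑ f : Fin k → Fin 7, ∑ π : Equiv.Perm (Fin k),
          ((Equiv.Perm.sign π : ℤ) : ℝ) * ((if f = idx ∘ π.symm then 1 else 0) *
            ((∏ i, c (f i))⁻¹ * σ (fun i => stdB (f i)))) := by
        rw [formInner]
        refine congrArg _ (Finset.sum_congr rfl fun f _ => ?_)
        simp only [eB, Matrix.det_apply, Matrix.of_apply, Units.smul_def, zsmul_eq_mul, hdelta,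
          Finset.sum_mul, Finset.mul_sum]
        exact Finset.sum_congr rfl fun _ _ => by ring
    _ = (k.factorial : ℝ)⁻¹ * ∑ _π : Equiv.Perm (Fin k),
          (∏ i, c (idx i))⁻¹ * σ (fun i => stdB (idx i)) := by
        rw [Finset.sum_comm]
        simp only [ite_mul, one_mul, zero_mul, Finset.sum_ite_eq', Finset.mem_univ,
          if_true, mul_ite, mul_zero, Finset.mul_sum, hperm]
    _ = (∏ i, c (idx i))⁻¹ * σ (fun i => stdB (idx i)) := by
        rw [Finset.sum_const, Finset.card_univ, Fintype.card_perm, Fintype.card_fin,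
          nsmul_eq_mul, ← mul_assoc, inv_mul_cancel₀ (by positivity), one_mul]

theorem tauH_eq : tauH = (2 : ℝ) • eB ![0, 1] + (2 : ℝ) • eB ![2, 3] + (-4 : ℝ) • eB ![4, 5] := by
  funext v
  simp only [tauH, Pi.add_apply, Pi.smul_apply, smul_eq_mul]
  ring

def tauAlt : V7 [⋀^Fin 2]→ₗ[ℝ] ℝ :=
  (2 : ℝ) • altB ![0, 1] + (2 : ℝ) • altB ![2, 3] + (-4 : ℝ) • altB ![4, 5]

theorem coe_tauAlt : ⇑tauAlt = tauH := by
  rw [tauH_eq]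
  rfl

theorem formInner_tauH_self : formInner (fun _ => 1) tauH tauH = 24 := by
  nth_rewrite 2 [← coe_tauAlt]
  rw [tauH_eq]
  simp only [formInner_add_left, formInner_smul_left, formInner_eB, tauAlt,
    AlternatingMap.add_apply, AlternatingMap.smul_apply, coe_altB, smul_eq_mul]
  simp [eB_stdB_of_strictMono]
  norm_num

theorem wedge_tauH_tauH : wedge tauH tauH
    = (8 : ℝ) • eB ![0, 1, 2, 3] + (-16 : ℝ) • eB ![0, 1, 4, 5] + (-16 : ℝ) • eB ![2, 3, 4, 5] := by
  have hdiag : ∀ a : Fin 2 → Fin 7, eB (Fin.append a a) = 0 := fun a =>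
    eB_eq_zero_of_not_injective fun h =>
      absurd (h (show Fin.append a a 0 = Fin.append a a 2 from rfl)) (by decide)
  have hcomm : ∀ a b : Fin 2 → Fin 7, eB (Fin.append b a) = eB (Fin.append a b) := by
    intro a b
    have hswap : Fin.append b a
        = Fin.append a b ∘ (Equiv.swap 0 2 * Equiv.swap 1 3 : Equiv.Perm (Fin 4)) := by
      funext i
      fin_cases i <;> rfl
    rw [hswap, eB_comp_perm,
      show Equiv.Perm.sign (Equiv.swap 0 2 * Equiv.swap 1 3 : Equiv.Perm (Fin 4)) = 1 by decide]
    simp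
  rw [tauH_eq]
  simp only [wedge_add_left, wedge_add_right, wedge_smul_left, wedge_smul_right, wedge_eB, hdiag,
    hcomm ![0, 1] ![2, 3], hcomm ![0, 1] ![4, 5], hcomm ![2, 3] ![4, 5]]
  rw [show Fin.append ![0, 1] ![2, 3] = (![0, 1, 2, 3] : Fin 4 → Fin 7) by decide,
    show Fin.append ![0, 1] ![4, 5] = (![0, 1, 4, 5] : Fin 4 → Fin 7) by decide,
    show Fin.append ![2, 3] ![4, 5] = (![2, 3, 4, 5] : Fin 4 → Fin 7) by decide]
  funext v
  simp only [Pi.add_apply, Pi.smul_apply, Pi.zero_apply, smul_eq_mul]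
  ring

theorem vol7_stdB : vol7 stdB = 1 := by
  rw [vol7, show (![0, 1, 2, 3, 4, 5, 6] : Fin 7 → Fin 7) = ⇑(1 : Equiv.Perm (Fin 7)) by decide,
    eB_stdB_perm, Equiv.Perm.sign_one]
  simp

def sigmaH : V7 [⋀^Fin 3]→ₗ[ℝ] ℝ :=
  (-16 : ℝ) • altB ![0, 1, 6] + (-16 : ℝ) • altB ![2, 3, 6] + (8 : ℝ) • altB ![4, 5, 6]

theorem sigmaH_apply (w : Fin 3 → V7) :
    sigmaH w = -16 * (eB ![0, 1, 6] w + eB ![2, 3, 6] w) + 8 * eB ![4, 5, 6] w := by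
  simp only [sigmaH, AlternatingMap.add_apply, AlternatingMap.smul_apply, coe_altB, smul_eq_mul]
  ring

theorem eq_sigmaH_of_wedge_tauH_tauH {σ : V7 [⋀^Fin 3]→ₗ[ℝ] ℝ}
    (H : ∀ α : V7 [⋀^Fin 3]→ₗ[ℝ] ℝ, ∀ w : Fin 7 → V7,
      wedge (⇑α) (wedge tauH tauH) w = formInner (fun _ => 1) (⇑α) (⇑σ) * vol7 w) :
    σ = sigmaH := by
  refine (Pi.basisFun ℝ (Fin 7)).ext_alternating_of_strictMono fun v hv => ?_
  simp only [← stdB_eq_basisFun]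
  have hσ : σ (fun i => stdB (v i)) = wedge (eB v) (wedge tauH tauH) stdB := by
    rw [← coe_altB, H, coe_altB, formInner_eB, vol7_stdB, mul_one]
    simp only [Finset.prod_const_one, inv_one, one_mul]
  rw [hσ, wedge_tauH_tauH, sigmaH_apply]
  simp only [wedge_add_right, wedge_smul_right, wedge_eB, Pi.add_apply, Pi.smul_apply,
    smul_eq_mul]
  have h456 : Function.Bijective (Fin.append (![4, 5, 6] : Fin 3 → Fin 7) ![0, 1, 2, 3]) := by
    decide
  have h236 : Function.Bijective (Fin.append (![2, 3, 6] : Fin 3 → Fin 7) ![0, 1, 4, 5]) := by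
    decide
  have h016 : Function.Bijective (Fin.append (![0, 1, 6] : Fin 3 → Fin 7) ![2, 3, 4, 5]) := by
    decide
  rw [eB_append_stdB hv (by simp) h456, eB_append_stdB hv (by simp) h236,
    eB_append_stdB hv (by simp) h016,
    show Equiv.Perm.sign (Equiv.ofBijective _ h456) = 1 by decide +revert,
    show Equiv.Perm.sign (Equiv.ofBijective _ h236) = 1 by decide +revert,
    show Equiv.Perm.sign (Equiv.ofBijective _ h016) = 1 by decide +revert,
    eB_stdB_of_strictMono hv (by simp), eB_stdB_of_strictMono hv (by simp),
    eB_stdB_of_strictMono hv (by simp)]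
  simp only [Units.val_one, Int.cast_one]
  ring

/-- `|τ|² = 24`, `*_φ(τ ∧ τ) = -16(e¹²⁷ + e³⁴⁷) + 8e⁵⁶⁷`, and
`dτ ≠ (1/6)|τ|²φ + (1/6) *_φ(τ ∧ τ)`: `φ` is not extremally Ricci pinched. -/
theorem not_ERP_H :
    formInner (fun _ => 1) tauH tauH = 24 ∧
    ∀ σ : AlternatingMap ℝ V7 ℝ (Fin 3),
      (∀ α : AlternatingMap ℝ V7 ℝ (Fin 3), ∀ w : Fin 7 → V7,
        wedge (⇑α) (wedge tauH tauH) w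
          = formInner (fun _ => 1) (⇑α) (⇑σ) * vol7 w) →
      (∀ w : Fin 3 → V7,
        σ w = -16 * (eB ![0, 1, 6] w + eB ![2, 3, 6] w) + 8 * eB ![4, 5, 6] w) ∧
      ¬ (∀ w, dCE brH tauH w
          = 1 / 6 * formInner (fun _ => 1) tauH tauH * phiH w + 1 / 6 * σ w) := by
  refine ⟨formInner_tauH_self, fun σ H => ?_⟩
  obtain rfl := eq_sigmaH_of_wedge_tauH_tauH H
  refine ⟨sigmaH_apply, fun hERP => ?_⟩
  have hdτ : dCE brH tauH (fun i => stdB (![0, 2, 4] i)) = 0 := by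
    simp (config := { decide := true }) [dCE, tauH, eB, brH, stdB, Fin.sum_univ_succ,
      Matrix.det_fin_two]
  have hφ : phiH (fun i => stdB (![0, 2, 4] i)) = 1 := by
    simp [phiH, eB_stdB_of_strictMono]
  have hσ : sigmaH (fun i => stdB (![0, 2, 4] i)) = 0 := by
    simp [sigmaH_apply, eB_stdB_of_strictMono]
  have h := hERP fun i => stdB (![0, 2, 4] i)
  rw [hdτ, formInner_tauH_self, hφ, hσ] at h
  norm_num at h

end G2Solitons
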